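/- arXiv:1603.01029 — 5 statements merged into one kernel-verified Lean document; each statement's English description precedes it below -/
import Mathlib

section
/- Let p(x) = f(Bᵀx)·φ_Q(x) where f: ℝᵐ → (0,∞) is twice continuously differentiable, B ∈ ℝ^{d×m}, and φ_Q is the centered Gaussian with positive definite covariance Q. Define v(x) := ∇ₓ log p(x) − (∇²ₓ log p(x))·x. Then v(x) = B·(∇_u log f(u)|_{u=Bᵀx} − (∇²_u log f(u)|_{u=Bᵀx})·Bᵀx); in particular v(x) lies in the column space of B for every x, regardless of the noise covariance Q. -/
open scoped Matrix

/-- Partial derivative of `f` at `x` in the `j`-th coordinate. -/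
noncomputable def pd {d : ℕ} (j : Fin d) (f : (Fin d → ℝ) → ℝ) (x : Fin d → ℝ) : ℝ :=
  deriv (fun t => f (Function.update x j t)) (x j)

/-- Gradient of `f` at `x` as a vector of partial derivatives. -/
noncomputable def gradv {d : ℕ} (f : (Fin d → ℝ) → ℝ) (x : Fin d → ℝ) : Fin d → ℝ :=
  fun j => pd j f x

/-- Centered Gaussian density with covariance `Q`. -/
noncomputable def gaussDensity {d : ℕ} (Q : Matrix (Fin d) (Fin d) ℝ) (x : Fin d → ℝ) : ℝ :=
  (2 * Real.pi) ^ (-(d : ℝ) / 2) * Q.det ^ (-(1 : ℝ) / 2) *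
    Real.exp (-(x ⬝ᵥ Q⁻¹.mulVec x) / 2)


/-- Hessian of `f` at `x` as a matrix of second partial derivatives. -/
noncomputable def hess {d : ℕ} (f : (Fin d → ℝ) → ℝ) (x : Fin d → ℝ) :
    Matrix (Fin d) (Fin d) ℝ :=
  fun i j => pd i (fun y => pd j f y) x

/-!
Write `L g x = ∇g x - ∇²g x · x` (`gradSubHessMulVec`). On `C²` functions `L` is additive, and it
annihilates `c + xᵀ A x`, whose gradient `(A + Aᵀ) x` is its constant symmetric Hessian applied to
`x`. The chain rule gives `∇(g ∘ Bᵀ) = B ∇g(Bᵀ ·)` and `∇²(g ∘ Bᵀ) = B ∇²g(Bᵀ ·) Bᵀ`, hence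
`L (g ∘ Bᵀ) x = B · L g (Bᵀ x)`. Since `log p = log f ∘ Bᵀ + log φ_Q` and `log φ_Q` is a constant
plus a quadratic form, `L (log p) x = B · L (log f) (Bᵀ x)`.
-/

open Matrix

section

variable {d m : ℕ}

theorem HasFDerivAt.pd_eq {g : (Fin d → ℝ) → ℝ} {g' : (Fin d → ℝ) →L[ℝ] ℝ} {x : Fin d → ℝ}
    (h : HasFDerivAt g g' x) (j : Fin d) : pd j g x = g' (Pi.single j 1) := by
  rw [← Function.update_eq_self j x] at h
  exact (h.comp_hasDerivAt (x j) (hasDerivAt_update x j (x j))).deriv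

theorem fderiv_apply_eq_dotProduct_gradv {g : (Fin d → ℝ) → ℝ} {x : Fin d → ℝ}
    (h : DifferentiableAt ℝ g x) (w : Fin d → ℝ) : fderiv ℝ g x w = w ⬝ᵥ gradv g x := by
  conv_lhs => rw [pi_eq_sum_univ' w]
  simp [dotProduct, gradv, h.hasFDerivAt.pd_eq]

theorem pd_add {F G : (Fin d → ℝ) → ℝ} {x : Fin d → ℝ} (hF : DifferentiableAt ℝ F x)
    (hG : DifferentiableAt ℝ G x) (j : Fin d) :
    pd j (fun y => F y + G y) x = pd j F x + pd j G x := by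
  rw [(hF.hasFDerivAt.fun_add hG.hasFDerivAt).pd_eq, hF.hasFDerivAt.pd_eq, hG.hasFDerivAt.pd_eq]
  rfl

theorem pd_sum_mul (c : Fin m → ℝ) {F : Fin m → (Fin d → ℝ) → ℝ} {x : Fin d → ℝ}
    (hF : ∀ k, DifferentiableAt ℝ (F k) x) (j : Fin d) :
    pd j (fun y => ∑ k, c k * F k y) x = ∑ k, c k * pd j (F k) x := by
  rw [(HasFDerivAt.fun_sum fun k _ => (hF k).hasFDerivAt.const_mul (c k)).pd_eq]
  simp [(hF _).hasFDerivAt.pd_eq]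

theorem pd_mulVec_apply (S : Matrix (Fin d) (Fin d) ℝ) (x : Fin d → ℝ) (i j : Fin d) :
    pd i (fun y => (S *ᵥ y) j) x = S j i := by
  have h : HasFDerivAt (fun y => (S *ᵥ y) j)
      ((ContinuousLinearMap.proj j).comp S.mulVecLin.toContinuousLinearMap) x :=
    ((ContinuousLinearMap.proj j).comp S.mulVecLin.toContinuousLinearMap).hasFDerivAt
  rw [h.pd_eq]
  simp

theorem contDiff_pd {n : WithTop ℕ∞} {g : (Fin d → ℝ) → ℝ} (hg : ContDiff ℝ (n + 1) g)
    (j : Fin d) : ContDiff ℝ n (pd j g) := by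
  have hpd : pd j g = fun x => fderiv ℝ g x (Pi.single j 1) :=
    funext fun x => (hg.differentiable (by simp) x).hasFDerivAt.pd_eq j
  rw [hpd]
  exact (hg.fderiv_right le_rfl).clm_apply contDiff_const

theorem gradv_add {F G : (Fin d → ℝ) → ℝ} {x : Fin d → ℝ} (hF : DifferentiableAt ℝ F x)
    (hG : DifferentiableAt ℝ G x) :
    gradv (fun y => F y + G y) x = gradv F x + gradv G x :=
  funext (pd_add hF hG)

theorem hess_add {F G : (Fin d → ℝ) → ℝ} (hF : ContDiff ℝ 2 F) (hG : ContDiff ℝ 2 G)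
    (x : Fin d → ℝ) : hess (fun y => F y + G y) x = hess F x + hess G x := by
  ext i j
  have hrow : (fun y => pd j (fun z => F z + G z) y) = fun y => pd j F y + pd j G y :=
    funext fun y => pd_add (hF.differentiable (by simp) y) (hG.differentiable (by simp) y) j
  change pd i (fun y => pd j (fun z => F z + G z) y) x = _
  rw [hrow, pd_add ((contDiff_pd (n := 1) hF j).differentiable (by simp) x)
    ((contDiff_pd (n := 1) hG j).differentiable (by simp) x)]
  rfl

theorem pd_comp_mulVec (B : Matrix (Fin d) (Fin m) ℝ) {g : (Fin m → ℝ) → ℝ} {x : Fin d → ℝ}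
    (hg : DifferentiableAt ℝ g (Bᵀ *ᵥ x)) (j : Fin d) :
    pd j (fun y => g (Bᵀ *ᵥ y)) x = B j ⬝ᵥ gradv g (Bᵀ *ᵥ x) := by
  have h : HasFDerivAt (fun y => g (Bᵀ *ᵥ y))
      ((fderiv ℝ g (Bᵀ *ᵥ x)).comp Bᵀ.mulVecLin.toContinuousLinearMap) x :=
    hg.hasFDerivAt.comp x Bᵀ.mulVecLin.toContinuousLinearMap.hasFDerivAt
  rw [h.pd_eq]
  simp [fderiv_apply_eq_dotProduct_gradv hg]
  rfl

theorem gradv_comp_mulVec (B : Matrix (Fin d) (Fin m) ℝ) {g : (Fin m → ℝ) → ℝ}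
    (hg : Differentiable ℝ g) (x : Fin d → ℝ) :
    gradv (fun y => g (Bᵀ *ᵥ y)) x = B *ᵥ gradv g (Bᵀ *ᵥ x) :=
  funext fun j => pd_comp_mulVec B (hg _) j

theorem hess_comp_mulVec (B : Matrix (Fin d) (Fin m) ℝ) {g : (Fin m → ℝ) → ℝ}
    (hg : ContDiff ℝ 2 g) (x : Fin d → ℝ) :
    hess (fun y => g (Bᵀ *ᵥ y)) x = B * hess g (Bᵀ *ᵥ x) * Bᵀ := by
  have hg₁ : Differentiable ℝ g := hg.differentiable (by simp)
  have hpd : ∀ k, Differentiable ℝ (pd k g) :=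
    fun k => (contDiff_pd (n := 1) hg k).differentiable (by simp)
  ext i j
  have hrow : (fun y => pd j (fun z => g (Bᵀ *ᵥ z)) y) = fun y => B j ⬝ᵥ gradv g (Bᵀ *ᵥ y) :=
    funext fun y => pd_comp_mulVec B (hg₁ _) j
  have hdiff : DifferentiableAt ℝ (fun u => B j ⬝ᵥ gradv g u) (Bᵀ *ᵥ x) := by
    simp only [dotProduct, gradv]
    fun_prop
  have hgrad : gradv (fun u => B j ⬝ᵥ gradv g u) (Bᵀ *ᵥ x) = hess g (Bᵀ *ᵥ x) *ᵥ B j :=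
    funext fun l => (pd_sum_mul (B j) (fun k => hpd k _) l).trans (dotProduct_comm _ _)
  change pd i (fun y => pd j (fun z => g (Bᵀ *ᵥ z)) y) x = _
  rw [hrow, pd_comp_mulVec B hdiff, hgrad, dotProduct_mulVec, mul_apply']
  rfl

theorem contDiff_const_add_quadForm (c : ℝ) (A : Matrix (Fin d) (Fin d) ℝ) :
    ContDiff ℝ 2 (fun y : Fin d → ℝ => c + y ⬝ᵥ A *ᵥ y) := by
  simp only [dotProduct, mulVec]
  fun_prop

theorem gradv_const_add_quadForm (c : ℝ) (A : Matrix (Fin d) (Fin d) ℝ) (x : Fin d → ℝ) :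
    gradv (fun y => c + y ⬝ᵥ A *ᵥ y) x = (A + Aᵀ) *ᵥ x := by
  have h : HasFDerivAt (fun y => c + y ⬝ᵥ A *ᵥ y)
      (∑ i, (x i • (ContinuousLinearMap.proj i).comp A.mulVecLin.toContinuousLinearMap
        + (A *ᵥ x) i • ContinuousLinearMap.proj i)) x :=
    (HasFDerivAt.fun_sum fun i _ => (hasFDerivAt_apply i x).mul
      ((ContinuousLinearMap.proj i).comp A.mulVecLin.toContinuousLinearMap).hasFDerivAt).const_add c
  funext j
  rw [gradv, h.pd_eq]
  simp [Finset.sum_add_distrib, add_mulVec, mulVec_transpose, vecMul, dotProduct, Pi.single_apply,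
    add_comm]

theorem hess_const_add_quadForm (c : ℝ) (A : Matrix (Fin d) (Fin d) ℝ) (x : Fin d → ℝ) :
    hess (fun y => c + y ⬝ᵥ A *ᵥ y) x = A + Aᵀ := by
  ext i j
  change pd i (fun y => gradv (fun y => c + y ⬝ᵥ A *ᵥ y) y j) x = _
  simp only [gradv_const_add_quadForm, pd_mulVec_apply, Matrix.add_apply, transpose_apply]
  ring

noncomputable def gradSubHessMulVec (g : (Fin d → ℝ) → ℝ) (x : Fin d → ℝ) : Fin d → ℝ :=
  gradv g x - hess g x *ᵥ x

theorem gradSubHessMulVec_add {F G : (Fin d → ℝ) → ℝ} (hF : ContDiff ℝ 2 F)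
    (hG : ContDiff ℝ 2 G) (x : Fin d → ℝ) :
    gradSubHessMulVec (fun y => F y + G y) x = gradSubHessMulVec F x + gradSubHessMulVec G x := by
  rw [gradSubHessMulVec, gradv_add (hF.differentiable (by simp) x)
    (hG.differentiable (by simp) x), hess_add hF hG, add_mulVec]
  exact add_sub_add_comm _ _ _ _

theorem gradSubHessMulVec_comp_mulVec (B : Matrix (Fin d) (Fin m) ℝ) {g : (Fin m → ℝ) → ℝ}
    (hg : ContDiff ℝ 2 g) (x : Fin d → ℝ) :
    gradSubHessMulVec (fun y => g (Bᵀ *ᵥ y)) x = B *ᵥ gradSubHessMulVec g (Bᵀ *ᵥ x) := by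
  rw [gradSubHessMulVec, gradSubHessMulVec, gradv_comp_mulVec B (hg.differentiable (by simp)),
    hess_comp_mulVec B hg, mulVec_sub, mulVec_mulVec, mulVec_mulVec]

theorem gradSubHessMulVec_const_add_quadForm (c : ℝ) (A : Matrix (Fin d) (Fin d) ℝ)
    (x : Fin d → ℝ) : gradSubHessMulVec (fun y => c + y ⬝ᵥ A *ᵥ y) x = 0 := by
  rw [gradSubHessMulVec, gradv_const_add_quadForm, hess_const_add_quadForm, sub_self]

theorem gaussDensity_pos {Q : Matrix (Fin d) (Fin d) ℝ} (hQ : Q.PosDef) (x : Fin d → ℝ) :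
    0 < gaussDensity Q x := by
  have hdet := hQ.det_pos
  unfold gaussDensity
  positivity

theorem log_gaussDensity {Q : Matrix (Fin d) (Fin d) ℝ} (hQ : Q.PosDef) (x : Fin d → ℝ) :
    Real.log (gaussDensity Q x)
      = Real.log (gaussDensity Q 0) + x ⬝ᵥ (-(2⁻¹ : ℝ) • Q⁻¹) *ᵥ x := by
  have hdet := hQ.det_pos
  have hc : 0 < (2 * Real.pi) ^ (-(d : ℝ) / 2) * Q.det ^ (-(1 : ℝ) / 2) := by positivity
  simp only [gaussDensity, Real.log_mul hc.ne' (Real.exp_pos _).ne', Real.log_exp, mulVec_zero,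
    dotProduct_zero, neg_zero, zero_div, add_zero, neg_smul, neg_mulVec, smul_mulVec,
    dotProduct_neg, dotProduct_smul, smul_eq_mul]
  ring

end

theorem stmt2 {d m : ℕ} (Q : Matrix (Fin d) (Fin d) ℝ) (hQ : Q.PosDef)
    (B : Matrix (Fin d) (Fin m) ℝ)
    (f : (Fin m → ℝ) → ℝ) (hf : ContDiff ℝ 2 f) (hfpos : ∀ u, 0 < f u)
    (p : (Fin d → ℝ) → ℝ)
    (hp : ∀ x, p x = f (Bᵀ.mulVec x) * gaussDensity Q x)
    (v : (Fin d → ℝ) → (Fin d → ℝ))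
    (hv : ∀ x, v x = gradv (fun y => Real.log (p y)) x
        - (hess (fun y => Real.log (p y)) x).mulVec x) :
    ∀ x : Fin d → ℝ,
      v x = B.mulVec (gradv (fun u => Real.log (f u)) (Bᵀ.mulVec x)
              - (hess (fun u => Real.log (f u)) (Bᵀ.mulVec x)).mulVec (Bᵀ.mulVec x)) ∧
      v x ∈ Set.range B.mulVec := by
  intro x
  have hlogf : ContDiff ℝ 2 (fun u => Real.log (f u)) := hf.log fun u => (hfpos u).ne'
  have hlogfB : ContDiff ℝ 2 (fun y => Real.log (f (Bᵀ *ᵥ y))) :=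
    hlogf.comp Bᵀ.mulVecLin.toContinuousLinearMap.contDiff
  have hlogp : (fun y => Real.log (p y)) = fun y => Real.log (f (Bᵀ *ᵥ y))
      + (Real.log (gaussDensity Q 0) + y ⬝ᵥ (-(2⁻¹ : ℝ) • Q⁻¹) *ᵥ y) := funext fun y => by
    rw [hp, Real.log_mul (hfpos _).ne' (gaussDensity_pos hQ y).ne', log_gaussDensity hQ]
  have hvx : v x = B *ᵥ gradSubHessMulVec (fun u => Real.log (f u)) (Bᵀ *ᵥ x) := by
    rw [hv, ← gradSubHessMulVec, hlogp,
      gradSubHessMulVec_add hlogfB (contDiff_const_add_quadForm _ _),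
      gradSubHessMulVec_comp_mulVec B hlogf, gradSubHessMulVec_const_add_quadForm, add_zero]
  exact ⟨hvx, hvx ▸ Set.mem_range_self _⟩
end

section
/- Let p be a C¹ density on ℝᵈ satisfying the boundary condition lim_{|y_j|→∞} g(y)p(y) = 0 for a C¹ model g. Then the squared-error risk J(g) := E[(g(y) − ∂_j log p(y))²] − E[(∂_j log p(y))²] equals E[g(y)² + 2·∂_j g(y)]. In particular the risk J can be expressed without any reference to the unknown quantity ∂_j log p except through expectations of g and its derivative. -/
/-!
Expanding the square, `(g - s)² - s²` with `s = ∂ⱼ log p` leaves `g² - 2 g s`, and `s p = ∂ⱼ p`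
turns the cross term into `∫ g ∂ⱼp`. By Fubini this is an iterated integral whose inner integral
runs along lines parallel to the `j`-th axis, where one-dimensional integration by parts applies;
the boundary terms vanish by the decay of `g p`, so `∫ g ∂ⱼp = -∫ (∂ⱼ g) p`.
-/

open MeasureTheory Filter

section Coordinate

variable {d : ℕ} (j : Fin d)

theorem hasDerivAt_pd_update {f : (Fin d → ℝ) → ℝ} (hf : Differentiable ℝ f)
    (x : Fin d → ℝ) (t : ℝ) :
    HasDerivAt (fun s => f (Function.update x j s)) (pd j f (Function.update x j t)) t := by
  have hd : pd j f (Function.update x j t) = deriv (fun s => f (Function.update x j s)) t := by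
    simp only [pd, Function.update_self, Function.update_idem]
  rw [hd]
  exact ((hf _).hasFDerivAt.comp_hasDerivAt t (hasDerivAt_update x j t)).differentiableAt.hasDerivAt

noncomputable def coordSplit : ℝ × ({i // ¬ i = j} → ℝ) ≃ᵐ (Fin d → ℝ) :=
  ((MeasurableEquiv.funUnique {i // i = j} ℝ).symm.prodCongr (MeasurableEquiv.refl _)).trans
    (MeasurableEquiv.piEquivPiSubtypeProd (fun _ => ℝ) (· = j)).symm

theorem coordSplit_apply (t : ℝ) (z : {i // ¬ i = j} → ℝ) :
    coordSplit j (t, z) = Function.update (coordSplit j (0, z)) j t := by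
  have hval : ∀ t i, coordSplit j (t, z) i = if h : i = j then t else z ⟨i, h⟩ := fun _ _ => rfl
  funext i
  by_cases h : i = j
  · subst h; simp [hval]
  · simp [hval, h]

theorem measurePreserving_coordSplit :
    MeasurePreserving (coordSplit j) := by
  have hfirst : MeasurePreserving (Prod.map (MeasurableEquiv.funUnique {i // i = j} ℝ).symm id)
      (volume : Measure (ℝ × ({i // ¬ i = j} → ℝ))) volume :=
    ((volume_preserving_funUnique {i // i = j} ℝ).symm _).prod (MeasurePreserving.id _)
  have hsplit := (volume_preserving_piEquivPiSubtypeProd (fun _ : Fin d => ℝ) (· = j)).symm _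
  rw [Subsingleton.elim (Subtype.fintype _) (Fintype.subtypeEq j)] at hsplit
  exact hsplit.comp hfirst

theorem integrable_comp_coordSplit {f : (Fin d → ℝ) → ℝ} (hf : Integrable f) :
    Integrable (fun q => f (coordSplit j q)) ((volume : Measure ℝ).prod volume) :=
  ((measurePreserving_coordSplit j).integrable_comp_emb (coordSplit j).measurableEmbedding).2 hf

theorem integral_eq_integral_integral_update {f : (Fin d → ℝ) → ℝ}
    (hf : Integrable f) :
    ∫ y, f y = ∫ z, ∫ t, f (Function.update (coordSplit j (0, z)) j t) := by
  rw [← (measurePreserving_coordSplit j).integral_comp' f, Measure.volume_eq_prod,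
    integral_prod_symm _ (integrable_comp_coordSplit j hf)]
  congr 1 with z
  congr 1 with t
  rw [coordSplit_apply]

theorem ae_integrable_update {f : (Fin d → ℝ) → ℝ} (hf : Integrable f) :
    ∀ᵐ z, Integrable fun t => f (Function.update (coordSplit j (0, z)) j t) := by
  filter_upwards [(integrable_comp_coordSplit j hf).prod_left_ae] with z hz
  simpa only [← coordSplit_apply] using hz

theorem integral_mul_pd_eq_neg_integral_pd_mul {u v : (Fin d → ℝ) → ℝ}
    (hu : Differentiable ℝ u) (hv : Differentiable ℝ v)
    (hlim : ∀ x : Fin d → ℝ, Tendsto (fun t => u (Function.update x j t) * v (Function.update x j t))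
      (cocompact ℝ) (nhds 0))
    (huv' : Integrable fun y => u y * pd j v y) (hu'v : Integrable fun y => pd j u y * v y) :
    ∫ y, u y * pd j v y = -∫ y, pd j u y * v y := by
  rw [integral_eq_integral_integral_update j huv', integral_eq_integral_integral_update j hu'v,
    ← integral_neg]
  refine integral_congr_ae ?_
  filter_upwards [ae_integrable_update j huv', ae_integrable_update j hu'v] with z h1 h2
  have hlimz := hlim (coordSplit j (0, z))
  rw [cocompact_eq_atBot_atTop, tendsto_sup] at hlimz
  simpa only [sub_self, zero_sub] using
    integral_mul_deriv_eq_deriv_mul (fun t _ => hasDerivAt_pd_update j hu _ t)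
      (fun t _ => hasDerivAt_pd_update j hv _ t) h1 h2 hlimz.1 hlimz.2

theorem pd_log_mul_self {p : (Fin d → ℝ) → ℝ} (hp : Differentiable ℝ p)
    {y : Fin d → ℝ} (hy : p y ≠ 0) :
    pd j (fun z => Real.log (p z)) y * p y = pd j p y := by
  have hslice := (hasDerivAt_pd_update j hp y (y j)).log (by rwa [Function.update_eq_self])
  have hlog : pd j (fun z => Real.log (p z)) y = pd j p y / p y := by
    simpa [pd] using hslice.deriv
  rw [hlog, div_mul_cancel₀ _ hy]

end Coordinate

theorem stmt5_general {d : ℕ} (j : Fin d) (p g : (Fin d → ℝ) → ℝ)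
    (hp : ContDiff ℝ 1 p) (hppos : ∀ x, 0 < p x)
    (hg : ContDiff ℝ 1 g)
    (hbound : ∀ x : Fin d → ℝ,
      Tendsto (fun t => g (Function.update x j t) * p (Function.update x j t))
        (cocompact ℝ) (nhds 0))
    (hint1 : Integrable (fun y => (g y) ^ 2 * p y))
    (hint2 : Integrable (fun y => pd j g y * p y))
    (hint3 : Integrable (fun y => (pd j (fun z => Real.log (p z)) y) ^ 2 * p y))
    (hint4 : Integrable (fun y => g y * pd j (fun z => Real.log (p z)) y * p y)) :
    (∫ y, (g y - pd j (fun z => Real.log (p z)) y) ^ 2 * p y)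
      - (∫ y, (pd j (fun z => Real.log (p z)) y) ^ 2 * p y)
      = ∫ y, (g y ^ 2 + 2 * pd j g y) * p y := by
  set s := pd j (fun z => Real.log (p z))
  have hdp := hp.differentiable one_ne_zero
  have hscore : ∀ y, g y * s y * p y = g y * pd j p y := fun y => by
    rw [mul_assoc, pd_log_mul_self j hdp (hppos y).ne']
  have hcross : ∫ y, g y * s y * p y = -∫ y, pd j g y * p y := by
    simp_rw [hscore]
    exact integral_mul_pd_eq_neg_integral_pd_mul j (hg.differentiable one_ne_zero) hdp hbound
      (hint4.congr (ae_of_all _ hscore)) hint2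
  calc (∫ y, (g y - s y) ^ 2 * p y) - ∫ y, s y ^ 2 * p y
      = (∫ y, g y ^ 2 * p y + s y ^ 2 * p y - 2 * (g y * s y * p y)) - ∫ y, s y ^ 2 * p y := by
        congr 2 with y; ring
    _ = ∫ y, g y ^ 2 * p y + 2 * (pd j g y * p y) := by
        have hint13 : Integrable fun y => g y ^ 2 * p y + s y ^ 2 * p y := hint1.add hint3
        rw [integral_sub hint13 (hint4.const_mul 2), integral_add hint1 hint3,
          integral_add hint1 (hint2.const_mul 2), integral_const_mul, integral_const_mul, hcross]
        ring
    _ = ∫ y, (g y ^ 2 + 2 * pd j g y) * p y := by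
        congr 1 with y; ring

theorem stmt5 {d : ℕ} (j : Fin d) (p g : (Fin d → ℝ) → ℝ)
    (hp : ContDiff ℝ 1 p) (hppos : ∀ x, 0 < p x) (hpdens : ∫ x, p x = 1)
    (hg : ContDiff ℝ 1 g)
    (hbound : ∀ x : Fin d → ℝ,
      Tendsto (fun t => g (Function.update x j t) * p (Function.update x j t))
        (cocompact ℝ) (nhds 0))
    (hint1 : Integrable (fun y => (g y) ^ 2 * p y))
    (hint2 : Integrable (fun y => pd j g y * p y))
    (hint3 : Integrable (fun y => (pd j (fun z => Real.log (p z)) y) ^ 2 * p y))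
    (hint4 : Integrable (fun y => g y * pd j (fun z => Real.log (p z)) y * p y)) :
    (∫ y, (g y - pd j (fun z => Real.log (p z)) y) ^ 2 * p y)
      - (∫ y, (pd j (fun z => Real.log (p z)) y) ^ 2 * p y)
      = ∫ y, (g y ^ 2 + 2 * pd j g y) * p y :=
  stmt5_general j p g hp hppos hg hbound hint1 hint2 hint3 hint4
end

section
/- Let R*(α) = αᵀ(S* + γ*I)α + 2αᵀt* with S* + γ*I positive definite with smallest eigenvalue ε > 0, minimized at α*. Let R̂(α) = αᵀ(S* + u_S + (γ* + u_γ)I)α + 2αᵀ(t* + u_t) be a perturbed objective with a minimizer α̂ lying in a ball of radius δ around α*. Then ‖α̂ − α*‖ ≤ (2(δ + ‖α*‖)(‖u_S‖_op + |u_γ|) + 2‖u_t‖)/ε. -/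
/-!
Write `R̂ = R* + P`, where `P(α) = αᵀ(u_S + u_γ I)α + 2αᵀu_t`. At the minimizer `α*` the linear
term of `R*` vanishes, so `R*(α* + d) = R*(α*) + dᵀ(S* + γ*I)d ≥ R*(α*) + ε‖d‖²`. Minimality of
`α̂ = α* + d` for `R̂` then gives `ε‖d‖² ≤ P(α*) - P(α̂)`, and on the ball of radius `δ` around `α*`
the function `P` is Lipschitz with constant `2(δ + ‖α*‖)(‖u_S‖ + |u_γ|) + 2‖u_t‖`.
-/

open scoped Matrix RealInnerProductSpace

section QuadraticObjective

variable {E : Type*} [NormedAddCommGroup E] [InnerProductSpace ℝ E]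

def quadraticObjective (A : E →L[ℝ] E) (t : E) (γ : ℝ) (x : E) : ℝ :=
  ⟪x, A x⟫ + 2 * ⟪x, t⟫ + γ * ‖x‖ ^ 2

variable (A : E →L[ℝ] E) (t : E) (γ : ℝ)

theorem quadraticObjective_add_coeffs
    (B : E →L[ℝ] E) (u : E) (η : ℝ) (x : E) :
    quadraticObjective (A + B) (t + u) (γ + η) x =
      quadraticObjective A t γ x + quadraticObjective B u η x := by
  simp only [quadraticObjective, add_apply, inner_add_right]
  ring

theorem quadraticObjective_add_smul (x d : E) (s : ℝ) :
    quadraticObjective A t γ (x + s • d) = quadraticObjective A t γ x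
      + s * (⟪x, A d⟫ + ⟪d, A x⟫ + 2 * ⟪d, t⟫ + 2 * γ * ⟪d, x⟫)
      + s ^ 2 * (⟪d, A d⟫ + γ * ‖d‖ ^ 2) := by
  simp only [quadraticObjective, ← real_inner_self_eq_norm_sq, map_add, map_smul,
    inner_add_left, inner_add_right, real_inner_smul_left, real_inner_smul_right]
  rw [real_inner_comm x d]
  ring

theorem quadraticObjective_add_of_forall_le {x : E}
    (hx : ∀ y, quadraticObjective A t γ x ≤ quadraticObjective A t γ y) (d : E) :
    quadraticObjective A t γ (x + d) =
      quadraticObjective A t γ x + (⟪d, A d⟫ + γ * ‖d‖ ^ 2) := by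
  have hL : ⟪x, A d⟫ + ⟪d, A x⟫ + 2 * ⟪d, t⟫ + 2 * γ * ⟪d, x⟫ = 0 := by
    have hdiscrim := discrim_le_zero (a := ⟪d, A d⟫ + γ * ‖d‖ ^ 2)
      (b := ⟪x, A d⟫ + ⟪d, A x⟫ + 2 * ⟪d, t⟫ + 2 * γ * ⟪d, x⟫) (c := 0) fun s => by
        have := hx (x + s • d)
        rw [quadraticObjective_add_smul] at this
        linarith
    rw [discrim, mul_zero, sub_zero] at hdiscrim
    exact pow_eq_zero_iff two_ne_zero |>.mp (le_antisymm hdiscrim (sq_nonneg _))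
  have hexp := quadraticObjective_add_smul A t γ x d 1
  rwa [one_smul, hL, one_mul, one_pow, one_mul, add_zero] at hexp

theorem abs_inner_map_le (v w : E) : |⟪v, A w⟫| ≤ ‖A‖ * ‖v‖ * ‖w‖ :=
  calc |⟪v, A w⟫| ≤ ‖v‖ * ‖A w‖ := abs_real_inner_le_norm v (A w)
    _ ≤ ‖v‖ * (‖A‖ * ‖w‖) := by gcongr; exact A.le_opNorm w
    _ = ‖A‖ * ‖v‖ * ‖w‖ := by ring

theorem abs_quadraticObjective_add_sub_le (x d : E) :
    |quadraticObjective A t γ (x + d) - quadraticObjective A t γ x| ≤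
      ((2 * ‖x‖ + ‖d‖) * (‖A‖ + |γ|) + 2 * ‖t‖) * ‖d‖ := by
  have hexp := quadraticObjective_add_smul A t γ x d 1
  rw [one_smul, one_mul, one_pow, one_mul] at hexp
  have h₁ := abs_inner_map_le A x d
  have h₂ := abs_inner_map_le A d x
  have h₃ := abs_inner_map_le A d d
  have h₄ : |⟪d, t⟫| ≤ ‖d‖ * ‖t‖ := abs_real_inner_le_norm d t
  have h₅ : |γ * ⟪d, x⟫| ≤ |γ| * (‖d‖ * ‖x‖) := by
    rw [abs_mul]; gcongr; exact abs_real_inner_le_norm d x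
  have h₆ : |γ * ‖d‖ ^ 2| ≤ |γ| * ‖d‖ ^ 2 := by rw [abs_mul, abs_of_nonneg (sq_nonneg ‖d‖)]
  rw [hexp, add_assoc, add_sub_cancel_left, abs_le]
  constructor <;>
  · simp only [abs_le] at h₁ h₂ h₃ h₄ h₅ h₆
    linarith

end QuadraticObjective

theorem stmt9_general {b : ℕ} (Ss uS : Matrix (Fin b) (Fin b) ℝ)
    (ts ut : EuclideanSpace ℝ (Fin b)) (γs uγ : ℝ) (ε δ : ℝ) (hε : 0 < ε)
    (heig : ∀ v : EuclideanSpace ℝ (Fin b),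
      ε * ‖v‖ ^ 2 ≤ ⟪v, Matrix.toEuclideanCLM (𝕜 := ℝ) Ss v⟫ + γs * ‖v‖ ^ 2)
    (Rs Rhat : EuclideanSpace ℝ (Fin b) → ℝ)
    (hRs : ∀ α, Rs α = ⟪α, Matrix.toEuclideanCLM (𝕜 := ℝ) Ss α⟫ + 2 * ⟪α, ts⟫ + γs * ‖α‖ ^ 2)
    (hRhat : ∀ α, Rhat α = ⟪α, Matrix.toEuclideanCLM (𝕜 := ℝ) (Ss + uS) α⟫
        + 2 * ⟪α, ts + ut⟫ + (γs + uγ) * ‖α‖ ^ 2)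
    (αs αh : EuclideanSpace ℝ (Fin b))
    (hαs : ∀ α, Rs αs ≤ Rs α) (hαh : ∀ α, Rhat αh ≤ Rhat α)
    (hδ : ‖αh - αs‖ ≤ δ) :
    ‖αh - αs‖ ≤ (2 * (δ + ‖αs‖) * (‖Matrix.toEuclideanCLM (𝕜 := ℝ) uS‖ + |uγ|)
        + 2 * ‖ut‖) / ε := by
  set A := Matrix.toEuclideanCLM (𝕜 := ℝ) Ss
  set B := Matrix.toEuclideanCLM (𝕜 := ℝ) uS
  obtain ⟨d, rfl⟩ : ∃ d, αh = αs + d := ⟨αh - αs, (add_sub_cancel αs αh).symm⟩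
  rw [add_sub_cancel_left] at hδ ⊢
  have hRs_eq : Rs = quadraticObjective A ts γs := funext hRs
  have hRhat_eq : ∀ α, Rhat α = Rs α + quadraticObjective B ut uγ α := fun α => by
    rw [hRhat, hRs_eq, map_add, ← quadraticObjective_add_coeffs]; rfl
  have growth : Rs αs + ε * ‖d‖ ^ 2 ≤ Rs (αs + d) := by
    rw [hRs_eq, quadraticObjective_add_of_forall_le A ts γs (hRs_eq ▸ hαs) d]
    linarith [heig d]
  have key : ε * ‖d‖ ^ 2 ≤ (2 * (δ + ‖αs‖) * (‖B‖ + |uγ|) + 2 * ‖ut‖) * ‖d‖ :=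
    calc ε * ‖d‖ ^ 2
        ≤ quadraticObjective B ut uγ αs - quadraticObjective B ut uγ (αs + d) := by
          linarith [hαh αs, hRhat_eq αs, hRhat_eq (αs + d)]
      _ ≤ |quadraticObjective B ut uγ (αs + d) - quadraticObjective B ut uγ αs| := by
          rw [abs_sub_comm]; exact le_abs_self _
      _ ≤ ((2 * ‖αs‖ + ‖d‖) * (‖B‖ + |uγ|) + 2 * ‖ut‖) * ‖d‖ :=
          abs_quadraticObjective_add_sub_le B ut uγ αs d
      _ ≤ (2 * (δ + ‖αs‖) * (‖B‖ + |uγ|) + 2 * ‖ut‖) * ‖d‖ := by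
          gcongr; linarith [norm_nonneg d]
  rcases (norm_nonneg d).eq_or_lt with hd0 | hdpos
  · have : 0 ≤ δ := hd0 ▸ hδ
    rw [← hd0]; positivity
  · rw [le_div_iff₀ hε]; nlinarith

theorem stmt9 {b : ℕ} (Ss uS : Matrix (Fin b) (Fin b) ℝ)
    (hSs : Ss.IsSymm) (huS : uS.IsSymm)
    (ts ut : EuclideanSpace ℝ (Fin b)) (γs uγ : ℝ) (ε δ : ℝ) (hε : 0 < ε)
    (heig : ∀ v : EuclideanSpace ℝ (Fin b),
      ε * ‖v‖ ^ 2 ≤ ⟪v, Matrix.toEuclideanCLM (𝕜 := ℝ) Ss v⟫ + γs * ‖v‖ ^ 2)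
    (Rs Rhat : EuclideanSpace ℝ (Fin b) → ℝ)
    (hRs : ∀ α, Rs α = ⟪α, Matrix.toEuclideanCLM (𝕜 := ℝ) Ss α⟫ + 2 * ⟪α, ts⟫ + γs * ‖α‖ ^ 2)
    (hRhat : ∀ α, Rhat α = ⟪α, Matrix.toEuclideanCLM (𝕜 := ℝ) (Ss + uS) α⟫
        + 2 * ⟪α, ts + ut⟫ + (γs + uγ) * ‖α‖ ^ 2)
    (αs αh : EuclideanSpace ℝ (Fin b))
    (hαs : ∀ α, Rs αs ≤ Rs α) (hαh : ∀ α, Rhat αh ≤ Rhat α)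
    (hδ : ‖αh - αs‖ ≤ δ) :
    ‖αh - αs‖ ≤ (2 * (δ + ‖αs‖) * (‖Matrix.toEuclideanCLM (𝕜 := ℝ) uS‖ + |uγ|)
        + 2 * ‖ut‖) / ε :=
  stmt9_general Ss uS ts ut γs uγ ε δ hε heig Rs Rhat hRs hRhat αs αh hαs hαh hδ
end

section
/- For a twice continuously differentiable positive density p on ℝᵈ with suitable decay, and a C¹ model w: ℝᵈ → ℝ with lim_{|x_j|→∞} w(x)p(x) = 0, the risk R(w) := E[(w(x) − v_j(x))²] − E[v_j(x)²], where v_j(x) = ∂_j log p(x) − (∇ ∂_j log p(x))ᵀx, equals E[w(x)² + 2∂_j w(x) + 2w(x)·(∇∂_j log p(x))ᵀx]. -/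
open MeasureTheory Filter

/-! Expanding the square, the risk is `E[w² − 2 w ∂ⱼ log p + 2 w (∇∂ⱼ log p)ᵀx]`. Since
`p ∂ⱼ log p = ∂ⱼ p`, the difference with the claimed integrand is `2 ∂ⱼ(w p)`, whose integral
vanishes: by Fubini it is an integral of integrals along lines parallel to `eⱼ`, and on each such
line `w p` tends to `0` at both ends. -/

open Function Topology

theorem hasDerivAt_pd {d : ℕ} (j : Fin d) {f : (Fin d → ℝ) → ℝ} {x : Fin d → ℝ} {t : ℝ}
    (hf : DifferentiableAt ℝ f (update x j t)) :
    HasDerivAt (fun s => f (update x j s)) (pd j f (update x j t)) t := by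
  have hd : DifferentiableAt ℝ (fun s => f (update x j s)) t :=
    hf.comp t (hasDerivAt_update x j t).differentiableAt
  simpa [pd, update_idem] using hd.hasDerivAt

theorem pd_log {d : ℕ} (j : Fin d) {f : (Fin d → ℝ) → ℝ} {x : Fin d → ℝ}
    (hf : DifferentiableAt ℝ f x) (hx : f x ≠ 0) :
    pd j (fun z => Real.log (f z)) x = pd j f x / f x := by
  have h := (hasDerivAt_pd j (x := x) (t := x j) (by simpa using hf)).log (by simpa using hx)
  simpa [pd] using h.deriv

theorem pd_mul {d : ℕ} (j : Fin d) {f g : (Fin d → ℝ) → ℝ} {x : Fin d → ℝ}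
    (hf : DifferentiableAt ℝ f x) (hg : DifferentiableAt ℝ g x) :
    pd j (fun z => f z * g z) x = pd j f x * g x + f x * pd j g x := by
  have h : HasDerivAt (fun s => f (update x j s) * g (update x j s)) _ (x j) :=
    (hasDerivAt_pd j (x := x) (t := x j) (by simpa using hf)).mul
    (hasDerivAt_pd j (x := x) (t := x j) (by simpa using hg))
  simpa only [pd, update_eq_self] using h.deriv

theorem integral_pd_eq_zero_of_tendsto {d : ℕ} (j : Fin d) {g : (Fin d → ℝ) → ℝ}
    (hg : Differentiable ℝ g) (hint : Integrable (pd j g))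
    (hlim : ∀ x, Tendsto (fun t => g (update x j t)) (cocompact ℝ) (𝓝 0)) :
    ∫ x, pd j g x = 0 := by
  obtain ⟨n, rfl⟩ : ∃ n, d = n + 1 := Nat.exists_eq_succ_of_ne_zero j.pos.ne'
  have hmp := (volume_preserving_piFinSuccAbove (fun _ : Fin (n + 1) => ℝ) j).symm
  have hemb :=
    (MeasurableEquiv.piFinSuccAbove (fun _ : Fin (n + 1) => ℝ) j).symm.measurableEmbedding
  have hsymm : ⇑(MeasurableEquiv.piFinSuccAbove (fun _ : Fin (n + 1) => ℝ) j).symm =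
      fun y => j.insertNth y.1 y.2 := by
    ext y
    simp [MeasurableEquiv.piFinSuccAbove_symm_apply, Fin.insertNthEquiv]
  rw [hsymm] at hmp hemb
  have hslices : Integrable (fun y : ℝ × (Fin n → ℝ) => pd j g (j.insertNth y.1 y.2))
      (volume.prod volume) :=
    (hmp.integrable_comp_emb hemb).2 hint
  rw [← hmp.integral_comp hemb, Measure.volume_eq_prod, integral_prod_symm _ hslices]
  refine integral_eq_zero_of_ae ?_
  filter_upwards [hslices.prod_left_ae] with z hz
  have hline : ∀ x, Integrable (fun t => pd j g (update x j t)) →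
      ∫ t, pd j g (update x j t) = 0 := fun x hx => by
    simpa using integral_of_hasDerivAt_of_tendsto (fun t => hasDerivAt_pd j (hg _)) hx
      ((hlim x).mono_left atBot_le_cocompact) ((hlim x).mono_left atTop_le_cocompact)
  simpa only [Fin.update_insertNth, Pi.zero_apply] using
    hline (j.insertNth 0 z) (by simpa only [Fin.update_insertNth] using hz)

theorem stmt14_general {d : ℕ} (j : Fin d) (p w : (Fin d → ℝ) → ℝ)
    (hp : ContDiff ℝ 2 p) (hppos : ∀ x, 0 < p x)
    (hw : ContDiff ℝ 1 w)
    (hbound : ∀ x : Fin d → ℝ,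
      Tendsto (fun t => w (Function.update x j t) * p (Function.update x j t))
        (cocompact ℝ) (nhds 0))
    (vj : (Fin d → ℝ) → ℝ)
    (hvj : ∀ x, vj x = pd j (fun z => Real.log (p z)) x
        - ∑ i, pd i (fun y => pd j (fun z => Real.log (p z)) y) x * x i)
    (hint1 : Integrable (fun x => (w x - vj x) ^ 2 * p x))
    (hint2 : Integrable (fun x => (vj x) ^ 2 * p x))
    (hint4 : Integrable (fun x => pd j w x * p x))
    (hint6 : Integrable (fun x => w x * pd j (fun z => Real.log (p z)) x * p x)) :
    (∫ x, (w x - vj x) ^ 2 * p x) - (∫ x, (vj x) ^ 2 * p x)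
      = ∫ x, ((w x) ^ 2 + 2 * pd j w x
          + 2 * w x * (∑ i, pd i (fun y => pd j (fun z => Real.log (p z)) y) x * x i)) * p x := by
  have hpd : Differentiable ℝ p := hp.differentiable (by norm_num)
  have hwd : Differentiable ℝ w := hw.differentiable (by norm_num)
  have hpd_wp : ∀ x, pd j (fun z => w z * p z) x
      = pd j w x * p x + w x * pd j (fun z => Real.log (p z)) x * p x := fun x => by
    rw [pd_mul j (hwd x) (hpd x), pd_log j (hpd x) (hppos x).ne', mul_assoc (w x),
      div_mul_cancel₀ _ (hppos x).ne']
  have hint_wp : Integrable (pd j fun z => w z * p z) := by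
    rw [show (pd j fun z => w z * p z) = _ from funext hpd_wp]
    exact hint4.add hint6
  have hibp : ∫ x, (pd j w x * p x + w x * pd j (fun z => Real.log (p z)) x * p x) = 0 := by
    simpa only [hpd_wp] using
      integral_pd_eq_zero_of_tendsto j (g := fun z => w z * p z) (hwd.mul hpd) hint_wp hbound
  calc (∫ x, (w x - vj x) ^ 2 * p x) - (∫ x, (vj x) ^ 2 * p x)
      = (∫ x, ((w x - vj x) ^ 2 * p x - (vj x) ^ 2 * p x))
        + 2 * ∫ x, (pd j w x * p x + w x * pd j (fun z => Real.log (p z)) x * p x) := by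
        rw [hibp, integral_sub hint1 hint2, mul_zero, add_zero]
    _ = _ := by
        rw [← integral_const_mul, ← integral_add]
        · congr 1 with x
          rw [hvj x]
          ring
        · exact hint1.sub hint2
        · exact (hint4.add hint6).const_mul 2

theorem stmt14 {d : ℕ} (j : Fin d) (p w : (Fin d → ℝ) → ℝ)
    (hp : ContDiff ℝ 2 p) (hppos : ∀ x, 0 < p x) (hpdens : ∫ x, p x = 1)
    (hw : ContDiff ℝ 1 w)
    (hbound : ∀ x : Fin d → ℝ,
      Tendsto (fun t => w (Function.update x j t) * p (Function.update x j t))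
        (cocompact ℝ) (nhds 0))
    (vj : (Fin d → ℝ) → ℝ)
    (hvj : ∀ x, vj x = pd j (fun z => Real.log (p z)) x
        - ∑ i, pd i (fun y => pd j (fun z => Real.log (p z)) y) x * x i)
    (hint1 : Integrable (fun x => (w x - vj x) ^ 2 * p x))
    (hint2 : Integrable (fun x => (vj x) ^ 2 * p x))
    (hint3 : Integrable (fun x => (w x) ^ 2 * p x))
    (hint4 : Integrable (fun x => pd j w x * p x))
    (hint5 : Integrable (fun x =>
      w x * (∑ i, pd i (fun y => pd j (fun z => Real.log (p z)) y) x * x i) * p x))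
    (hint6 : Integrable (fun x => w x * pd j (fun z => Real.log (p z)) x * p x)) :
    (∫ x, (w x - vj x) ^ 2 * p x) - (∫ x, (vj x) ^ 2 * p x)
      = ∫ x, ((w x) ^ 2 + 2 * pd j w x
          + 2 * w x * (∑ i, pd i (fun y => pd j (fun z => Real.log (p z)) y) x * x i)) * p x :=
  stmt14_general j p w hp hppos hw hbound vj hvj hint1 hint2 hint4 hint6
end

section
/- Let Γ̂, Γ* ∈ ℝ^{d×d} be symmetric positive semidefinite with ‖Γ̂ − Γ*‖_op ≤ ε, and suppose Γ* has eigenvalues λ₁ ≥ ... ≥ λ_m > λ_{m+1} ≥ ... ≥ λ_d with spectral gap δ = λ_m − λ_{m+1} > 0 and ε < δ/2. Then the orthogonal projections P̂ and P* onto the spans of the top-m eigenvectors of Γ̂ and Γ* respectively satisfy ‖P̂ − P*‖_op ≤ 2ε/δ (a Davis–Kahan type bound), so the estimated principal subspace of Γ̂ converges to that of Γ* at the rate of ‖Γ̂ − Γ*‖_op. -/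
/-!
Write `P`, `Q` for the projections of `Γh`, `Γs`. Because each projection commutes with its
matrix, `X = Q (1 - P)` solves the Sylvester equation
`Γs X = X (Γh (1 - P)) + Q (Γs - Γh) (1 - P)`. On the range of `Q` the quadratic form of `Γs` is at
least `lam`, while `Γh (1 - P)` is positive with norm at most `max b 0 ≤ lam' + ε`; pairing the
equation with `X x` gives `‖X‖ ≤ ε / (δ - ε)`. Exchanging the roles bounds `‖P (1 - Q)‖` in the
same way, and as `(P - Q) x` splits orthogonally into `P (1 - Q) x` and `-(1 - P) Q x`,
`‖P - Q‖ ≤ ε / (δ - ε) ≤ 2 ε / δ`.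

The second bound needs `lam' ≥ 0`, which positivity of `Γs` gives as soon as `m < d`; for `m = d`
both projections are the identity.
-/

open scoped Matrix InnerProductSpace
open RCLike WithLp

namespace ContinuousLinearMap

variable {𝕜 E : Type*} [RCLike 𝕜] [NormedAddCommGroup E] [InnerProductSpace 𝕜 E]

theorem IsPositive.nonneg_of_re_inner_le {T : E →L[𝕜] E} (hT : T.IsPositive) {x : E}
    (hx : x ≠ 0) {c : ℝ} (h : re ⟪T x, x⟫_𝕜 ≤ c * ‖x‖ ^ 2) : 0 ≤ c :=
  nonneg_of_mul_nonneg_left ((hT.re_inner_nonneg_left x).trans h) (by positivity)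

theorem IsPositive.norm_le_of_re_inner_le {T : E →L[𝕜] E} (hT : T.IsPositive) {c : ℝ}
    (hc : 0 ≤ c) (h : ∀ x, re ⟪T x, x⟫_𝕜 ≤ c * ‖x‖ ^ 2) : ‖T‖ ≤ c := by
  rw [T.norm_eq_iSup_rayleighQuotient hT.isSymmetric]
  refine ciSup_le fun x => ?_
  rw [abs_of_nonneg (div_nonneg (hT.2 x) (by positivity))]
  rcases eq_or_ne x 0 with rfl | hx
  · simpa using hc
  exact div_le_of_le_mul₀ (by positivity) hc (h x)

theorem norm_le_div_of_mul_eq_mul_add {A B X F : E →L[𝕜] E} {α β : ℝ} (hβα : β < α)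
    (hA : ‖A‖ ≤ β) (hB : ∀ x, α * ‖X x‖ ^ 2 ≤ re ⟪B (X x), X x⟫_𝕜) (h : B * X = X * A + F) :
    ‖X‖ ≤ ‖F‖ / (α - β) := by
  have hβ : 0 ≤ β := (norm_nonneg A).trans hA
  have hα : 0 < α := hβ.trans_lt hβα
  have hX : ‖X‖ ≤ (β * ‖X‖ + ‖F‖) / α := by
    refine X.opNorm_le_bound (by positivity) fun x => ?_
    rw [div_mul_eq_mul_div, le_div_iff₀ hα, mul_comm]
    rcases (norm_nonneg (X x)).eq_or_lt with h0 | hpos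
    · rw [← h0, mul_zero]; positivity
    refine le_of_mul_le_mul_right ?_ hpos
    have hBX : B (X x) = X (A x) + F x := by simpa using congr($h x)
    calc α * ‖X x‖ * ‖X x‖ = α * ‖X x‖ ^ 2 := by ring
      _ ≤ re ⟪B (X x), X x⟫_𝕜 := hB x
      _ ≤ ‖B (X x)‖ * ‖X x‖ := (re_le_norm _).trans (norm_inner_le_norm _ _)
      _ ≤ (‖X‖ * (β * ‖x‖) + ‖F‖ * ‖x‖) * ‖X x‖ := by
        rw [hBX]
        gcongr
        refine norm_add_le_of_le ((X.le_opNorm _).trans ?_) (F.le_opNorm x)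
        gcongr
        exact A.le_of_opNorm_le hA x
      _ = (β * ‖X‖ + ‖F‖) * ‖x‖ * ‖X x‖ := by ring
  rw [le_div_iff₀ hα] at hX
  rw [le_div_iff₀ (sub_pos.mpr hβα)]
  linarith

end ContinuousLinearMap

section StarProjection

open ContinuousLinearMap

variable {𝕜 E : Type*} [RCLike 𝕜] [NormedAddCommGroup E] [InnerProductSpace 𝕜 E] [CompleteSpace E]
  {p q : E →L[𝕜] E}

theorem IsStarProjection.norm_sq_add_norm_sq_one_sub (hp : IsStarProjection p) (x : E) :
    ‖p x‖ ^ 2 + ‖(1 - p) x‖ ^ 2 = ‖x‖ ^ 2 := by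
  obtain ⟨K, _, rfl⟩ := isStarProjection_iff_eq_starProjection.mp hp
  rw [← K.starProjection_orthogonal', ← K.norm_sq_eq_add_norm_sq_starProjection]

theorem IsStarProjection.norm_apply_le (hp : IsStarProjection p) (x : E) : ‖p x‖ ≤ ‖x‖ :=
  (p.le_opNorm x).trans (mul_le_of_le_one_left (norm_nonneg x) (hp.norm_le p))

theorem IsStarProjection.norm_sub_le_of_norm_mul_one_sub_le (hp : IsStarProjection p)
    (hq : IsStarProjection q) {K : ℝ} (hpq : ‖p * (1 - q)‖ ≤ K) (hqp : ‖q * (1 - p)‖ ≤ K) :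
    ‖p - q‖ ≤ K := by
  have hK : 0 ≤ K := (norm_nonneg _).trans hpq
  have hqp' : ‖(1 - p) * q‖ ≤ K := by
    rwa [← norm_star, star_mul, hq.isSelfAdjoint.star_eq, hp.one_sub.isSelfAdjoint.star_eq]
  refine opNorm_le_bound _ hK fun x => ?_
  have hp2 := hp.isIdempotentElem.eq
  have hq2 := hq.isIdempotentElem.eq
  have e₁ : p * (p - q) = p * (1 - q) * (1 - q) := by
    simp only [mul_sub, sub_mul, mul_one, hp2, hq2, mul_assoc]; abel
  have e₂ : (1 - p) * (p - q) = -((1 - p) * q * q) := by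
    simp only [mul_sub, sub_mul, one_mul, hp2, hq2, mul_assoc]; abel
  have h₁ : ‖p ((p - q) x)‖ ≤ K * ‖(1 - q) x‖ := by
    rw [← mul_apply_eq_comp, e₁, mul_apply_eq_comp]
    exact le_of_opNorm_le _ hpq _
  have h₂ : ‖(1 - p) ((p - q) x)‖ ≤ K * ‖q x‖ := by
    rw [← mul_apply_eq_comp, e₂, neg_apply, norm_neg, mul_apply_eq_comp]
    exact le_of_opNorm_le _ hqp' _
  have hsq : ‖(p - q) x‖ ^ 2 ≤ (K * ‖x‖) ^ 2 := by
    rw [← hp.norm_sq_add_norm_sq_one_sub, mul_pow, ← hq.norm_sq_add_norm_sq_one_sub x]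
    nlinarith [norm_nonneg (p ((p - q) x)), norm_nonneg ((1 - p) ((p - q) x))]
  exact (pow_le_pow_iff_left₀ (norm_nonneg _) (by positivity) two_ne_zero).mp hsq

theorem IsStarProjection.norm_mul_one_sub_le_of_isPositive {G : E →L[𝕜] E}
    (hp : IsStarProjection p) (hG : G.IsPositive) (hGp : Commute G p) {β : ℝ} (hβ : 0 ≤ β)
    (h : ∀ x, p x = 0 → re ⟪G x, x⟫_𝕜 ≤ β * ‖x‖ ^ 2) : ‖G * (1 - p)‖ ≤ β := by
  have hs : IsSelfAdjoint (1 - p) := hp.one_sub.isSelfAdjoint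
  have e : G * (1 - p) = (1 - p) * G * (1 - p) := by
    rw [mul_assoc, ((Commute.one_right G).sub_right hGp).eq, ← mul_assoc,
      hp.one_sub.isIdempotentElem.eq]
  have hpos : (G * (1 - p)).IsPositive := by
    have := hG.conj_adjoint (1 - p)
    rwa [hs.adjoint_eq, ← mul_def, ← mul_def, ← mul_assoc, ← e] at this
  refine hpos.norm_le_of_re_inner_le hβ fun x => ?_
  have hx : p ((1 - p) x) = 0 := by rw [← mul_apply_eq_comp, hp.mul_one_sub_self, zero_apply]
  calc re ⟪(G * (1 - p)) x, x⟫_𝕜 = re ⟪G ((1 - p) x), (1 - p) x⟫_𝕜 := by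
        rw [e, mul_apply_eq_comp, mul_apply_eq_comp]
        exact congrArg re (hs.isSymmetric _ _)
    _ ≤ β * ‖(1 - p) x‖ ^ 2 := h _ hx
    _ ≤ β * ‖x‖ ^ 2 := by gcongr; exact hp.one_sub.norm_apply_le x

theorem IsStarProjection.norm_mul_one_sub_le_div {G H : E →L[𝕜] E} (hp : IsStarProjection p)
    (hq : IsStarProjection q) (hG : G.IsPositive) (hGp : Commute G p) (hHq : Commute H q)
    {α β ε : ℝ} (hβ : 0 ≤ β) (hβα : β < α)
    (hGβ : ∀ x, p x = 0 → re ⟪G x, x⟫_𝕜 ≤ β * ‖x‖ ^ 2)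
    (hHα : ∀ x, q x = x → α * ‖x‖ ^ 2 ≤ re ⟪H x, x⟫_𝕜) (hε : ‖G - H‖ ≤ ε) :
    ‖q * (1 - p)‖ ≤ ε / (α - β) := by
  have hε₀ : 0 ≤ ε := (norm_nonneg _).trans hε
  have hF : ‖q * (H - G) * (1 - p)‖ ≤ ε :=
    calc ‖q * (H - G) * (1 - p)‖ ≤ ‖q‖ * ‖H - G‖ * ‖1 - p‖ := norm_mul₃_le
      _ ≤ 1 * ε * 1 := by
        gcongr
        exacts [hq.norm_le q, norm_sub_rev G H ▸ hε, hp.one_sub.norm_le _]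
      _ = ε := by ring
  have hsylvester : H * (q * (1 - p)) = q * (1 - p) * (G * (1 - p)) + q * (H - G) * (1 - p) := by
    have hcomm : (1 - p) * G = G * (1 - p) := ((Commute.one_right G).sub_right hGp).eq.symm
    rw [← mul_assoc, hHq.eq, mul_assoc q (1 - p), ← mul_assoc (1 - p), hcomm, mul_assoc G,
      hp.one_sub.isIdempotentElem.eq]
    noncomm_ring
  have hrange (x : E) : q ((q * (1 - p)) x) = (q * (1 - p)) x := by
    rw [← mul_apply_eq_comp, ← mul_assoc, hq.isIdempotentElem.eq]
  refine (norm_le_div_of_mul_eq_mul_add hβα (hp.norm_mul_one_sub_le_of_isPositive hG hGp hβ hGβ)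
    (fun x => hHα _ (hrange x)) hsylvester).trans ?_
  gcongr

theorem IsStarProjection.norm_sub_le_div_of_gap {G H : E →L[𝕜] E} (hp : IsStarProjection p)
    (hq : IsStarProjection q) (hG : G.IsPositive) (hH : H.IsPositive) (hGp : Commute G p)
    (hHq : Commute H q) {a b a' b' ε κ : ℝ} (hb : 0 ≤ b) (hb' : 0 ≤ b') (hκ : 0 < κ)
    (hκb : κ ≤ a' - b) (hκb' : κ ≤ a - b')
    (hGa : ∀ x, p x = x → a * ‖x‖ ^ 2 ≤ re ⟪G x, x⟫_𝕜)
    (hGb : ∀ x, p x = 0 → re ⟪G x, x⟫_𝕜 ≤ b * ‖x‖ ^ 2)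
    (hHa : ∀ x, q x = x → a' * ‖x‖ ^ 2 ≤ re ⟪H x, x⟫_𝕜)
    (hHb : ∀ x, q x = 0 → re ⟪H x, x⟫_𝕜 ≤ b' * ‖x‖ ^ 2) (hε : ‖G - H‖ ≤ ε) :
    ‖p - q‖ ≤ ε / κ := by
  have hε₀ : 0 ≤ ε := (norm_nonneg _).trans hε
  refine hp.norm_sub_le_of_norm_mul_one_sub_le hq ?_ ?_
  · refine (hq.norm_mul_one_sub_le_div hp hH hHq hGp hb' (sub_pos.mp (hκ.trans_le hκb')) hHb hGa
      (norm_sub_rev G H ▸ hε)).trans ?_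
    exact div_le_div_of_nonneg_left hε₀ hκ hκb'
  · refine (hp.norm_mul_one_sub_le_div hq hG hGp hHq hb (sub_pos.mp (hκ.trans_le hκb)) hGb hHa
      hε).trans ?_
    exact div_le_div_of_nonneg_left hε₀ hκ hκb

end StarProjection

theorem EuclideanSpace.real_norm_sq_eq_dotProduct {n : Type*} [Fintype n]
    (x : EuclideanSpace ℝ n) : ‖x‖ ^ 2 = ofLp x ⬝ᵥ ofLp x := by
  rw [← real_inner_self_eq_norm_sq, EuclideanSpace.inner_eq_star_dotProduct, star_trivial]

namespace Matrix

variable {n : Type*} [Fintype n] [DecidableEq n]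

theorem eq_one_of_mul_self_of_rank_eq {K : Type*} [Field K] {P : Matrix n n K} (hP : P * P = P)
    (hr : P.rank = Fintype.card n) : P = 1 := by
  have hrange : LinearMap.range P.mulVecLin = ⊤ :=
    Submodule.eq_top_of_finrank_eq (hr.trans (Module.finrank_fintype_fun_eq_card K).symm)
  refine mulVec_injective (funext fun v => ?_)
  obtain ⟨w, rfl⟩ := LinearMap.range_eq_top.mp hrange v
  simp [mulVec_mulVec, hP]

theorem exists_mulVec_eq_zero_of_rank_lt {K : Type*} [Field K] {A : Matrix n n K}
    (hr : A.rank < Fintype.card n) : ∃ v, v ≠ 0 ∧ A *ᵥ v = 0 :=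
  exists_mulVec_eq_zero_iff.mpr (by_contra fun h => hr.ne (rank_of_det_ne_zero h))

open scoped ComplexOrder in
theorem isPositive_toEuclideanCLM {𝕜 : Type*} [RCLike 𝕜] {G : Matrix n n 𝕜} (hG : G.PosSemidef) :
    (toEuclideanCLM (𝕜 := 𝕜) G).IsPositive :=
  (LinearMap.isPositive_toContinuousLinearMap_iff _).mpr (isPositive_toEuclideanLin_iff.mpr hG)

theorem isStarProjection_toEuclideanCLM {P : Matrix n n ℝ} (hs : P.IsSymm) (hP : P * P = P) :
    IsStarProjection (toEuclideanCLM (𝕜 := ℝ) P) :=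
  IsStarProjection.map ⟨hP, isHermitian_iff_isSymm.mpr hs⟩ _

theorem re_inner_toEuclideanCLM_self (G : Matrix n n ℝ) (x : EuclideanSpace ℝ n) :
    re ⟪toEuclideanCLM (𝕜 := ℝ) G x, x⟫_ℝ = ofLp x ⬝ᵥ G *ᵥ ofLp x := by
  rw [re_to_real, real_inner_comm, inner_toEuclideanCLM]

theorem forall_le_re_inner_toEuclideanCLM {P G : Matrix n n ℝ} {c : ℝ}
    (h : ∀ v, P *ᵥ v = v → c * (v ⬝ᵥ v) ≤ v ⬝ᵥ G *ᵥ v) (x : EuclideanSpace ℝ n)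
    (hx : toEuclideanCLM (𝕜 := ℝ) P x = x) :
    c * ‖x‖ ^ 2 ≤ re ⟪toEuclideanCLM (𝕜 := ℝ) G x, x⟫_ℝ := by
  rw [EuclideanSpace.real_norm_sq_eq_dotProduct, re_inner_toEuclideanCLM_self]
  exact h _ (by simpa using congr(ofLp $hx))

theorem forall_re_inner_toEuclideanCLM_le {P G : Matrix n n ℝ} {c : ℝ}
    (h : ∀ v, P *ᵥ v = 0 → v ⬝ᵥ G *ᵥ v ≤ c * (v ⬝ᵥ v)) (x : EuclideanSpace ℝ n)
    (hx : toEuclideanCLM (𝕜 := ℝ) P x = 0) :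
    re ⟪toEuclideanCLM (𝕜 := ℝ) G x, x⟫_ℝ ≤ c * ‖x‖ ^ 2 := by
  rw [EuclideanSpace.real_norm_sq_eq_dotProduct, re_inner_toEuclideanCLM_self]
  exact h _ (by simpa using congr(ofLp $hx))

end Matrix

theorem stmt19 {d m : ℕ} (hmd : m ≤ d)
    (Γh Γs Ph Ps : Matrix (Fin d) (Fin d) ℝ)
    (hΓh : Γh.PosSemidef) (hΓs : Γs.PosSemidef)
    (lam lam' δ ε : ℝ) (hδ : δ = lam - lam') (hδpos : 0 < δ)
    (hε : ‖Matrix.toEuclideanCLM (𝕜 := ℝ) (Γh - Γs)‖ ≤ ε) (hεδ : ε < δ / 2)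
    -- `Ps` is the orthogonal projection onto the span of the top-`m` eigenvectors of `Γs`:
    (hPs_sym : Ps.IsSymm) (hPs_idem : Ps * Ps = Ps) (hPs_rank : Ps.rank = m)
    (hPs_comm : Γs * Ps = Ps * Γs)
    (hPs_top : ∀ v : Fin d → ℝ, Ps.mulVec v = v → lam * (v ⬝ᵥ v) ≤ v ⬝ᵥ Γs.mulVec v)
    (hPs_bot : ∀ v : Fin d → ℝ, Ps.mulVec v = 0 → v ⬝ᵥ Γs.mulVec v ≤ lam' * (v ⬝ᵥ v))
    -- `Ph` is the orthogonal projection onto the span of the top-`m` eigenvectors of `Γh`;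
    -- by Weyl's inequality its top-`m` eigenvalues are at least `lam - ε` and the rest
    -- are at most `lam' + ε`:
    (a b : ℝ) (ha : lam - ε ≤ a) (hb : b ≤ lam' + ε)
    (hPh_sym : Ph.IsSymm) (hPh_idem : Ph * Ph = Ph) (hPh_rank : Ph.rank = m)
    (hPh_comm : Γh * Ph = Ph * Γh)
    (hPh_top : ∀ v : Fin d → ℝ, Ph.mulVec v = v → a * (v ⬝ᵥ v) ≤ v ⬝ᵥ Γh.mulVec v)
    (hPh_bot : ∀ v : Fin d → ℝ, Ph.mulVec v = 0 → v ⬝ᵥ Γh.mulVec v ≤ b * (v ⬝ᵥ v)) :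
    ‖Matrix.toEuclideanCLM (𝕜 := ℝ) (Ph - Ps)‖ ≤ 2 * ε / δ := by
  have hε₀ : 0 ≤ ε := (norm_nonneg _).trans hε
  obtain rfl | hmd := hmd.eq_or_lt
  · have hPs : Ps = 1 := Matrix.eq_one_of_mul_self_of_rank_eq hPs_idem (by simpa using hPs_rank)
    have hPh : Ph = 1 := Matrix.eq_one_of_mul_self_of_rank_eq hPh_idem (by simpa using hPh_rank)
    simp only [hPs, hPh, sub_self, map_zero, norm_zero]
    positivity
  obtain ⟨v, hv, hPsv⟩ :=
    Matrix.exists_mulVec_eq_zero_of_rank_lt (by rwa [hPs_rank, Fintype.card_fin])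
  have hPs_bot' := Matrix.forall_re_inner_toEuclideanCLM_le hPs_bot
  have hlam' : 0 ≤ lam' := (Matrix.isPositive_toEuclideanCLM hΓs).nonneg_of_re_inner_le
    (x := toLp 2 v) (by simpa using hv) (hPs_bot' _ (by simp [hPsv]))
  have hδε : 0 < δ - ε := by linarith
  have hgap₁ : δ - ε ≤ lam - max b 0 := by grind
  have hgap₂ : δ - ε ≤ a - lam' := by linarith
  rw [map_sub] at hε ⊢
  calc _ ≤ ε / (δ - ε) :=
        (Matrix.isStarProjection_toEuclideanCLM hPh_sym hPh_idem).norm_sub_le_div_of_gap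
          (Matrix.isStarProjection_toEuclideanCLM hPs_sym hPs_idem)
          (Matrix.isPositive_toEuclideanCLM hΓh) (Matrix.isPositive_toEuclideanCLM hΓs)
          (Commute.map hPh_comm _) (Commute.map hPs_comm _) (le_max_right b 0) hlam' hδε
          hgap₁ hgap₂ (Matrix.forall_le_re_inner_toEuclideanCLM hPh_top)
          (fun x hx => (Matrix.forall_re_inner_toEuclideanCLM_le hPh_bot x hx).trans
            (by gcongr; exact le_max_left b 0))
          (Matrix.forall_le_re_inner_toEuclideanCLM hPs_top) hPs_bot' hε
    _ ≤ 2 * ε / δ := by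
      rw [div_le_div_iff₀ hδε hδpos]
      nlinarith
end
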